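/- With h = u + v + u⁻¹ + v⁻¹ + u⁻¹v⁻¹ in A = ℂ⟨u^{±1},v^{±1}⟩, the Kontsevich double bracket satisfies ⟨⟨h,h⟩⟩_K = 1 ⊗ a - h ⊗ b + e ⊗ 1, where a = u⁻¹ + v⁻¹ - u⁻¹v⁻¹ + v⁻¹u⁻¹ + u⁻¹v⁻¹u⁻¹ + v⁻¹u⁻¹v⁻¹ + u⁻¹v⁻¹u⁻¹v⁻¹, b = u⁻¹v⁻¹, and e = uv - vu. -/

import Mathlib

open scoped TensorProduct

noncomputable section

abbrev A : Type := MonoidAlgebra ℂ (FreeGroup Bool)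

def u : A := MonoidAlgebra.of ℂ (FreeGroup Bool) (FreeGroup.of false)
def v : A := MonoidAlgebra.of ℂ (FreeGroup Bool) (FreeGroup.of true)
def ui : A := MonoidAlgebra.of ℂ (FreeGroup Bool) (FreeGroup.of false)⁻¹
def vi : A := MonoidAlgebra.of ℂ (FreeGroup Bool) (FreeGroup.of true)⁻¹

/-- The structure of a Kontsevich double bracket on A: a bilinear map
A × A → A ⊗ A satisfying both Leibniz rules and the prescribed values on the
generators u, v. -/
structure KontsevichBracket (db : A →ₗ[ℂ] A →ₗ[ℂ] A ⊗[ℂ] A) : Prop where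
  outer : ∀ a b c : A,
    db a (b * c) = db a b * ((1 : A) ⊗ₜ[ℂ] c) + (b ⊗ₜ[ℂ] (1 : A)) * db a c
  inner : ∀ a b c : A,
    db (a * b) c = db a c * (b ⊗ₜ[ℂ] (1 : A)) + ((1 : A) ⊗ₜ[ℂ] a) * db b c
  huv : db u v = -((v * u) ⊗ₜ[ℂ] (1 : A))
  hvu : db v u = (u * v) ⊗ₜ[ℂ] (1 : A)
  huu : db u u = 0
  hvv : db v v = 0

def h : A := u + v + ui + vi + ui * vi
def a : A := ui + vi - ui * vi + vi * ui + ui * vi * ui + vi * ui * vi + ui * vi * ui * vi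
def b : A := ui * vi
def e : A := u * v - v * u

/-! Both Leibniz rules force the bracket to vanish when one argument is `1`, hence
`⟨⟨x, y⁻¹⟩⟩ = -(y⁻¹ ⊗ 1) ⟨⟨x, y⟩⟩ (1 ⊗ y⁻¹)` and `⟨⟨y⁻¹, x⟩⟩ = -(1 ⊗ y⁻¹) ⟨⟨y, x⟩⟩ (y⁻¹ ⊗ 1)`.
With these and the Leibniz rules for the monomial `u⁻¹v⁻¹`, each of the 25 brackets of monomials
of `h` reduces to the four brackets of generators, and the identity becomes a cancellation in
`A ⊗ A`. -/

section Leibniz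

variable {K R : Type*} [CommRing K] [Ring R] [Algebra K R]

def OuterLeibniz (db : R →ₗ[K] R →ₗ[K] R ⊗[K] R) : Prop :=
  ∀ x y z : R, db x (y * z) = db x y * ((1 : R) ⊗ₜ[K] z) + (y ⊗ₜ[K] (1 : R)) * db x z

def InnerLeibniz (db : R →ₗ[K] R →ₗ[K] R ⊗[K] R) : Prop :=
  ∀ x y z : R, db (x * y) z = db x z * (y ⊗ₜ[K] (1 : R)) + ((1 : R) ⊗ₜ[K] x) * db y z

namespace OuterLeibniz

variable {db : R →ₗ[K] R →ₗ[K] R ⊗[K] R} (hdb : OuterLeibniz db)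
include hdb

theorem apply_one_right (x : R) : db x 1 = 0 := by
  simpa [← Algebra.TensorProduct.one_def] using hdb x 1 1

theorem apply_right_inverse {y y' : R} (hyy' : y * y' = 1) (hy'y : y' * y = 1) (x : R) :
    db x y' = -((y' ⊗ₜ[K] (1 : R)) * db x y * ((1 : R) ⊗ₜ[K] y')) := by
  have hsum := hdb x y y'
  rw [hyy', hdb.apply_one_right] at hsum
  calc db x y' = (y' ⊗ₜ[K] (1 : R)) * ((y ⊗ₜ[K] (1 : R)) * db x y') := by
        rw [← mul_assoc, Algebra.TensorProduct.tmul_mul_tmul, hy'y, mul_one,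
          ← Algebra.TensorProduct.one_def, one_mul]
    _ = _ := by rw [eq_neg_of_add_eq_zero_right hsum.symm, mul_neg, mul_assoc]

end OuterLeibniz

namespace InnerLeibniz

variable {db : R →ₗ[K] R →ₗ[K] R ⊗[K] R} (hdb : InnerLeibniz db)
include hdb

theorem apply_one_left (x : R) : db 1 x = 0 := by
  simpa [← Algebra.TensorProduct.one_def] using hdb 1 1 x

theorem apply_left_inverse {y y' : R} (hyy' : y * y' = 1) (hy'y : y' * y = 1) (x : R) :
    db y' x = -(((1 : R) ⊗ₜ[K] y') * db y x * (y' ⊗ₜ[K] (1 : R))) := by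
  have hsum := hdb y y' x
  rw [hyy', hdb.apply_one_left] at hsum
  calc db y' x = ((1 : R) ⊗ₜ[K] y') * (((1 : R) ⊗ₜ[K] y) * db y' x) := by
        rw [← mul_assoc, Algebra.TensorProduct.tmul_mul_tmul, hy'y, mul_one,
          ← Algebra.TensorProduct.one_def, one_mul]
    _ = _ := by rw [eq_neg_of_add_eq_zero_right hsum.symm, mul_neg, mul_assoc]

end InnerLeibniz

end Leibniz

theorem mul_mul_cancel_left_of_mul_eq_one {M : Type*} [Monoid M] {y y' : M} (h : y * y' = 1)
    (x : M) : y * (y' * x) = x := by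
  rw [← mul_assoc, h, one_mul]

theorem u_mul_ui : u * ui = 1 := by rw [u, ui, ← map_mul, mul_inv_cancel, map_one]
theorem ui_mul_u : ui * u = 1 := by rw [u, ui, ← map_mul, inv_mul_cancel, map_one]
theorem v_mul_vi : v * vi = 1 := by rw [v, vi, ← map_mul, mul_inv_cancel, map_one]
theorem vi_mul_v : vi * v = 1 := by rw [v, vi, ← map_mul, inv_mul_cancel, map_one]

theorem kontsevich_double_bracket_hh
    (db : A →ₗ[ℂ] A →ₗ[ℂ] A ⊗[ℂ] A) (hK : KontsevichBracket db) :
    db h h = (1 : A) ⊗ₜ[ℂ] a - h ⊗ₜ[ℂ] b + e ⊗ₜ[ℂ] (1 : A) := by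
  have hout : OuterLeibniz db := hK.outer
  have hin : InnerLeibniz db := hK.inner
  simp only [h, map_add, LinearMap.add_apply, hout _ ui vi, hin ui vi,
    hout.apply_right_inverse u_mul_ui ui_mul_u, hout.apply_right_inverse v_mul_vi vi_mul_v,
    hin.apply_left_inverse u_mul_ui ui_mul_u, hin.apply_left_inverse v_mul_vi vi_mul_v,
    hK.huu, hK.huv, hK.hvu, hK.hvv]
  simp only [a, b, e, Algebra.TensorProduct.tmul_mul_tmul, neg_mul, mul_neg, neg_neg,
    zero_mul, mul_zero, neg_zero, add_zero, zero_add, one_mul, mul_one, mul_assoc,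
    TensorProduct.tmul_add, TensorProduct.add_tmul, TensorProduct.tmul_sub,
    TensorProduct.sub_tmul, u_mul_ui, ui_mul_u, v_mul_vi, vi_mul_v,
    mul_mul_cancel_left_of_mul_eq_one ui_mul_u, mul_mul_cancel_left_of_mul_eq_one vi_mul_v]
  abel
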